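/- arXiv:2509.10700 — 2 statements merged into one kernel-verified Lean document; each statement's English description precedes it below -/
import Mathlib

section
/- Let n ≥ 1 and let L be a positive integer with 2n | L, and set M = L/n. Then for every even positive integer α, the generating polynomials satisfy F^{(α)}_{G^{(z^n+1)}(L)}(t) = (F^{(α)}_{G^{(z+1)}(M)}(t))^n as polynomials in t. -/
open scoped BigOperators Matrix

/-- `θ_k = (2π/L)(k - 1/2)` for `k = 1, …, L` (here `k : Fin L` is the 0-based index,
so `θ_k = (2π/L)(k + 1/2)`). -/
noncomputable def theta (L : ℕ) (k : Fin L) : ℝ :=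
  2 * Real.pi / L * ((k : ℝ) + 1 / 2)

/-- The half-shifted correlation matrix
`G^{(f)}(L)_{nm} = ((-1)^{n-m}/L) Σ_{k=1}^{L} (f(e^{iθ_k})/|f(e^{iθ_k})|) e^{iθ_k (n-m)}`. -/
noncomputable def Gf (L : ℕ) (f : ℂ → ℂ) : Matrix (Fin L) (Fin L) ℂ :=
  Matrix.of fun n m : Fin L =>
    (-1 : ℂ) ^ ((n : ℤ) - (m : ℤ)) / (L : ℂ) *
      ∑ k : Fin L,
        f (Complex.exp (Complex.I * (theta L k : ℂ))) /
            ((‖f (Complex.exp (Complex.I * (theta L k : ℂ)))‖ : ℝ) : ℂ) *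
          Complex.exp (Complex.I * (theta L k : ℂ) * (((n : ℤ) - (m : ℤ) : ℤ) : ℂ))

/-- The square submatrix of `A` with rows indexed by `I` and columns indexed by `J`
(both in increasing order), as a determinant; it is `0` if `I.card ≠ J.card`. -/
noncomputable def subdetC {N : ℕ} (A : Matrix (Fin N) (Fin N) ℂ) (I J : Finset (Fin N)) : ℂ :=
  if h : J.card = I.card then
    Matrix.det (Matrix.of fun a b : Fin I.card =>
      A (I.orderEmbOfFin rfl a) (J.orderEmbOfFin h b))
  else 0

/-- `S_r^{(α)}(A) = Σ_{|I|=|J|=r} |det A[I,J]|^α`. -/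
noncomputable def SpowC {N : ℕ} (A : Matrix (Fin N) (Fin N) ℂ) (α : ℝ) (r : ℕ) : ℝ :=
  ∑ I ∈ Finset.univ.filter (fun I : Finset (Fin N) => I.card = r),
    ∑ J ∈ Finset.univ.filter (fun J : Finset (Fin N) => J.card = r),
      ‖subdetC A I J‖ ^ α

/-- The generating polynomial `F^{(α)}_A(t) = Σ_{r=0}^{N} S_r^{(α)}(A) t^r`. -/
noncomputable def genPoly {N : ℕ} (A : Matrix (Fin N) (Fin N) ℂ) (α : ℝ) : Polynomial ℝ :=
  ∑ r ∈ Finset.range (N + 1), Polynomial.C (SpowC A α r) * Polynomial.X ^ r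

/-!
Write `L = n M` and index `Fin L` by `r + n a` with `r < n`, `a < M`. Splitting the sum over `k`
in `G^{(zⁿ+1)}(L)_{pq}` as `k = j + M m`, the phase `f(e^{iθ_k}) / |f(e^{iθ_k})|` depends only on
`j`, because `e^{i n θ_k} = e^{i θ_j}` for the angles `θ_j` of size `M`, and the sum over `m` is a
sum of `n`-th roots of unity, which vanishes unless `p ≡ q (mod n)`. Hence, after a permutation,
`G^{(zⁿ+1)}(L)` is block diagonal with `n` copies of `D G^{(z+1)}(M) D`, where `D` is a diagonal
matrix of signs. The generating polynomial is invariant under permutations and unimodular diagonal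
scalings, and multiplicative over block-diagonal sums, since a minor of `diag(A, B)` is either zero
or the product of a minor of `A` and a minor of `B`.
-/

open Finset Polynomial

namespace Finset

variable {α β : Type*}

def disjSumEquiv (s : Finset α) (t : Finset β) : ↥(s.disjSum t) ≃ ↥s ⊕ ↥t :=
  Equiv.subtypeSum.trans <| Equiv.sumCongr
    (Equiv.subtypeEquivRight fun _ => inl_mem_disjSum)
    (Equiv.subtypeEquivRight fun _ => inr_mem_disjSum)

end Finset

namespace Matrix

theorem norm_det_submatrix_equiv_equiv {m n R : Type*} [Fintype m] [DecidableEq m] [Fintype n]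
    [DecidableEq n] [NormedField R] (e₁ e₂ : n ≃ m) (A : Matrix m m R) :
    ‖(A.submatrix e₁ e₂).det‖ = ‖A.det‖ := by
  have hee : e₂ = e₁.trans (e₁.symm.trans e₂) := by ext; simp
  rw [hee]
  change ‖((A.submatrix id (e₁.symm.trans e₂)).submatrix e₁ e₁).det‖ = ‖A.det‖
  rw [det_submatrix_equiv_self, det_permute', norm_mul]
  rcases Int.units_eq_one_or (Equiv.Perm.sign (e₁.symm.trans e₂)) with h | h <;> simp [h]

variable {𝕜 : Type*} [RCLike 𝕜] {ι ι' κ κ' : Type*}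

/-- The enumerations of `I` and `J` chosen by `Finset.equivFin` only affect the sign of the
determinant (`minorNorm_eq_norm_det`). -/
noncomputable def minorNorm (A : Matrix ι κ 𝕜) (I : Finset ι) (J : Finset κ) : ℝ :=
  if h : #I = #J then
    ‖(A.submatrix (fun a => (I.equivFin.symm a : ι))
      (fun b => (J.equivFin.symm (finCongr h b) : κ))).det‖
  else 0

theorem minorNorm_of_card_ne (A : Matrix ι κ 𝕜) {I : Finset ι} {J : Finset κ} (h : #I ≠ #J) :
    minorNorm A I J = 0 :=
  dif_neg h

theorem minorNorm_nonneg (A : Matrix ι κ 𝕜) (I : Finset ι) (J : Finset κ) :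
    0 ≤ minorNorm A I J := by
  unfold minorNorm
  split_ifs <;> positivity

theorem minorNorm_eq_norm_det {m : Type*} [Fintype m] [DecidableEq m] (A : Matrix ι κ 𝕜)
    {I : Finset ι} {J : Finset κ} (e : m ≃ I) (f : m ≃ J) :
    minorNorm A I J = ‖(A.submatrix (fun x => (e x : ι)) (fun x => (f x : κ))).det‖ := by
  have h : #I = #J := by simpa using Fintype.card_congr (e.symm.trans f)
  rw [minorNorm, dif_pos h, ← norm_det_submatrix_equiv_equiv (I.equivFin.symm.trans e.symm)
    ((finCongr h).trans (J.equivFin.symm.trans f.symm))]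
  simp [Function.comp_def]

theorem minorNorm_empty (A : Matrix ι κ 𝕜) : minorNorm A ∅ ∅ = 1 := by
  simp [minorNorm]

theorem minorNorm_submatrix (A : Matrix ι κ 𝕜) (e : ι' ≃ ι) (f : κ' ≃ κ) (I : Finset ι')
    (J : Finset κ') :
    minorNorm (A.submatrix e f) I J = minorNorm A (I.map e.toEmbedding) (J.map f.toEmbedding) := by
  classical
  by_cases h : #I = #J
  · let g := Finset.equivOfCardEq h
    rw [minorNorm_eq_norm_det _ (Equiv.refl I) g,
      minorNorm_eq_norm_det _ (e.subtypeEquiv fun _ => (mem_map' _).symm)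
        (g.trans (f.subtypeEquiv fun _ => (mem_map' _).symm))]
    rfl
  · rw [minorNorm_of_card_ne _ h, minorNorm_of_card_ne _ (by simpa using h)]

theorem minorNorm_scale (A : Matrix ι κ 𝕜) (s : ι → 𝕜) (t : κ → 𝕜) (I : Finset ι)
    (J : Finset κ) :
    minorNorm (of fun i j => s i * t j * A i j) I J
      = (∏ i ∈ I, ‖s i‖) * (∏ j ∈ J, ‖t j‖) * minorNorm A I J := by
  classical
  by_cases h : #I = #J
  · let g := Finset.equivOfCardEq h
    have hdiag : (of fun i j => s i * t j * A i j).submatrix (fun x : I => (x : ι))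
          (fun x => (g x : κ))
        = diagonal (fun x : I => s x) * A.submatrix (fun x : I => (x : ι)) (fun x => (g x : κ))
          * diagonal (fun x => t (g x)) := by
      ext x y
      simp only [submatrix_apply, of_apply, mul_diagonal, diagonal_mul]
      ring
    rw [minorNorm_eq_norm_det _ (Equiv.refl I) g, minorNorm_eq_norm_det _ (Equiv.refl I) g]
    simp only [Equiv.refl_apply]
    rw [hdiag, det_mul, det_mul, det_diagonal, det_diagonal, norm_mul, norm_mul, norm_prod,
      norm_prod, g.prod_comp (fun y => ‖t y‖), prod_coe_sort I (fun i => ‖s i‖),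
      prod_coe_sort J (fun j => ‖t j‖)]
    ring
  · simp [minorNorm_of_card_ne _ h]

/-- Scaling the rows of the first block by `2` and its columns by `1 / 2` fixes
`fromBlocks A 0 0 B`, but multiplies the minor by `2 ^ #I₁ / 2 ^ #J₁`. -/
theorem minorNorm_fromBlocks_of_card_ne (A : Matrix ι ι' 𝕜) (B : Matrix κ κ' 𝕜)
    {I₁ : Finset ι} {J₁ : Finset ι'} (I₂ : Finset κ) (J₂ : Finset κ') (h : #I₁ ≠ #J₁) :
    minorNorm (fromBlocks A 0 0 B) (I₁.disjSum I₂) (J₁.disjSum J₂) = 0 := by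
  have hfix : (of fun i j => Sum.elim (fun _ => (2 : 𝕜)) 1 i * Sum.elim (fun _ => (2 : 𝕜)⁻¹) 1 j
      * fromBlocks A 0 0 B i j) = fromBlocks A 0 0 B := by
    ext (i | i) (j | j) <;> simp
  have hscale := minorNorm_scale (fromBlocks A 0 0 B) (Sum.elim (fun _ => (2 : 𝕜)) 1)
    (Sum.elim (fun _ => (2 : 𝕜)⁻¹) 1) (I₁.disjSum I₂) (J₁.disjSum J₂)
  rw [hfix, prod_disjSum, prod_disjSum] at hscale
  simp only [Sum.elim_inl, Sum.elim_inr, Pi.one_apply, norm_one, prod_const_one, mul_one,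
    norm_inv, RCLike.norm_two, prod_const] at hscale
  by_contra hne
  have h2 : (2 : ℝ) ^ #I₁ = 2 ^ #J₁ := by
    have := mul_right_cancel₀ hne (hscale.symm.trans (one_mul _).symm)
    rwa [inv_pow, mul_inv_eq_one₀ (by positivity)] at this
  exact h (Nat.pow_right_injective le_rfl (by exact_mod_cast h2))

theorem minorNorm_fromBlocks (A : Matrix ι ι' 𝕜) (B : Matrix κ κ' 𝕜) (I₁ : Finset ι)
    (J₁ : Finset ι') (I₂ : Finset κ) (J₂ : Finset κ') :
    minorNorm (fromBlocks A 0 0 B) (I₁.disjSum I₂) (J₁.disjSum J₂)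
      = minorNorm A I₁ J₁ * minorNorm B I₂ J₂ := by
  classical
  by_cases h₁ : #I₁ = #J₁
  · by_cases h₂ : #I₂ = #J₂
    · let g₁ := Finset.equivOfCardEq h₁
      let g₂ := Finset.equivOfCardEq h₂
      rw [minorNorm_eq_norm_det _ (Equiv.refl I₁) g₁, minorNorm_eq_norm_det _ (Equiv.refl I₂) g₂,
        minorNorm_eq_norm_det _ (disjSumEquiv I₁ I₂).symm
          ((Equiv.sumCongr g₁ g₂).trans (disjSumEquiv J₁ J₂).symm), ← norm_mul,
        ← det_fromBlocks_zero₂₁ _ 0]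
      congr 2
      ext (i | i) (j | j) <;> rfl
    · rw [minorNorm_of_card_ne B h₂, mul_zero, minorNorm_of_card_ne]
      simp only [card_disjSum]
      omega
  · rw [minorNorm_fromBlocks_of_card_ne A B I₂ J₂ h₁, minorNorm_of_card_ne A h₁, zero_mul]

theorem submatrix_blockDiagonal_fin_add {R : Type*} [Zero R] (A : Matrix ι κ R) (m n : ℕ) :
    (blockDiagonal fun _ : Fin (m + n) => A).submatrix
        ((Equiv.prodSumDistrib ι (Fin m) (Fin n)).symm.trans
          ((Equiv.refl ι).prodCongr finSumFinEquiv))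
        ((Equiv.prodSumDistrib κ (Fin m) (Fin n)).symm.trans
          ((Equiv.refl κ).prodCongr finSumFinEquiv))
      = fromBlocks (blockDiagonal fun _ : Fin m => A) 0 0 (blockDiagonal fun _ : Fin n => A) := by
  ext (⟨i, k⟩ | ⟨i, k⟩) (⟨j, l⟩ | ⟨j, l⟩) <;> simp [blockDiagonal_apply, Fin.ext_iff] <;> omega

variable [Fintype ι] [Fintype κ]

/-- For `α = 0` the pairs with `#I ≠ #J` also contribute, since `0 ^ 0 = 1`. -/
noncomputable def minorGenPoly (A : Matrix ι ι 𝕜) (α : ℝ) : ℝ[X] :=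
  ∑ I : Finset ι, ∑ J : Finset ι, C (minorNorm A I J ^ α) * X ^ #I

theorem minorGenPoly_of_isEmpty [IsEmpty ι] (A : Matrix ι ι 𝕜) (α : ℝ) :
    minorGenPoly A α = 1 := by
  simp [minorGenPoly, Finset.univ_unique, Subsingleton.elim (default : Finset ι) ∅, minorNorm_empty]

theorem minorGenPoly_submatrix_equiv (A : Matrix ι ι 𝕜) (e : κ ≃ ι) (α : ℝ) :
    minorGenPoly (A.submatrix e e) α = minorGenPoly A α :=
  Fintype.sum_equiv (Equiv.finsetCongr e) _ _ fun I =>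
    Fintype.sum_equiv (Equiv.finsetCongr e) _ _ fun J => by simp [minorNorm_submatrix]

theorem minorGenPoly_scale (A : Matrix ι ι 𝕜) {s t : ι → 𝕜} (hs : ∀ i, ‖s i‖ = 1)
    (ht : ∀ i, ‖t i‖ = 1) (α : ℝ) :
    minorGenPoly (of fun i j => s i * t j * A i j) α = minorGenPoly A α := by
  simp [minorGenPoly, minorNorm_scale, hs, ht]

theorem minorGenPoly_fromBlocks (A : Matrix ι ι 𝕜) (B : Matrix κ κ 𝕜) (α : ℝ) :
    minorGenPoly (fromBlocks A 0 0 B) α = minorGenPoly A α * minorGenPoly B α := by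
  have hterm (I₁ J₁ : Finset ι) (I₂ J₂ : Finset κ) :
      C (minorNorm (fromBlocks A 0 0 B) (I₁.disjSum I₂) (J₁.disjSum J₂) ^ α)
          * X ^ #(I₁.disjSum I₂)
        = C (minorNorm A I₁ J₁ ^ α) * X ^ #I₁ * (C (minorNorm B I₂ J₂ ^ α) * X ^ #I₂) := by
    rw [minorNorm_fromBlocks, Real.mul_rpow (minorNorm_nonneg ..) (minorNorm_nonneg ..),
      card_disjSum, C_mul, pow_add]
    ring
  let e : Finset ι × Finset κ ≃ Finset (ι ⊕ κ) := Finset.sumEquiv.symm.toEquiv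
  rw [minorGenPoly, ← e.sum_comp]
  simp only [← e.sum_comp (fun J => C (minorNorm _ (e _) J ^ α) * X ^ #(e _)),
    Fintype.sum_prod_type]
  simp only [e, OrderIso.coe_toEquiv, sumEquiv_symm_apply, hterm, minorGenPoly, sum_mul_sum]

theorem minorGenPoly_blockDiagonal (A : Matrix ι ι 𝕜) (α : ℝ) (n : ℕ) :
    minorGenPoly (blockDiagonal fun _ : Fin n => A) α = minorGenPoly A α ^ n := by
  induction n with
  | zero => exact minorGenPoly_of_isEmpty _ α
  | succ n ih =>
    have hone : (blockDiagonal fun _ : Fin 1 => A).submatrix (Equiv.prodUnique ι (Fin 1)).symm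
        (Equiv.prodUnique ι (Fin 1)).symm = A := by
      ext i j
      simp [blockDiagonal_apply]
    rw [← minorGenPoly_submatrix_equiv _ ((Equiv.prodSumDistrib ι (Fin n) (Fin 1)).symm.trans
      ((Equiv.refl ι).prodCongr finSumFinEquiv)), submatrix_blockDiagonal_fin_add,
      minorGenPoly_fromBlocks, ih,
      ← minorGenPoly_submatrix_equiv _ (Equiv.prodUnique ι (Fin 1)).symm, hone, pow_succ]

end Matrix

theorem norm_subdetC {N : ℕ} (A : Matrix (Fin N) (Fin N) ℂ) (I J : Finset (Fin N)) :
    ‖subdetC A I J‖ = Matrix.minorNorm A I J := by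
  unfold subdetC
  split_ifs with h
  · rw [Matrix.minorNorm_eq_norm_det A (I.orderIsoOfFin rfl).toEquiv (J.orderIsoOfFin h).toEquiv]
    rfl
  · rw [norm_zero, Matrix.minorNorm_of_card_ne A (Ne.symm h)]

theorem genPoly_eq_minorGenPoly {N : ℕ} (A : Matrix (Fin N) (Fin N) ℂ) {α : ℝ} (hα : α ≠ 0) :
    genPoly A α = Matrix.minorGenPoly A α := by
  have hvanish (I J : Finset (Fin N)) (h : C (Matrix.minorNorm A I J ^ α) * X ^ #I ≠ 0) :
      #J = #I := by
    by_contra hne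
    simp [Matrix.minorNorm_of_card_ne A (Ne.symm hne), Real.zero_rpow hα] at h
  calc genPoly A α
      = ∑ r ∈ range (N + 1), ∑ I with #I = r, ∑ J with #J = #I,
          C (Matrix.minorNorm A I J ^ α) * X ^ #I := by
        refine sum_congr rfl fun r _ => ?_
        simp only [SpowC, norm_subdetC, map_sum, sum_mul]
        refine sum_congr rfl fun I hI => ?_
        rw [(mem_filter.1 hI).2]
    _ = ∑ I, ∑ J with #J = #I, C (Matrix.minorNorm A I J ^ α) * X ^ #I :=
        sum_fiberwise_of_maps_to (fun I _ => by simpa [Nat.lt_succ_iff] using card_le_univ I) _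
    _ = Matrix.minorGenPoly A α :=
        sum_congr rfl fun I _ => sum_filter_of_ne fun J _ => hvanish I J

theorem IsPrimitiveRoot.sum_range_zpow_pow {K : Type*} [Field K] {ζ : K} {n : ℕ}
    (hζ : IsPrimitiveRoot ζ n) (d : ℤ) :
    ∑ m ∈ range n, (ζ ^ d) ^ m = if (n : ℤ) ∣ d then (n : K) else 0 := by
  split_ifs with h
  · simp [(hζ.zpow_eq_one_iff_dvd d).2 h]
  · have hpow : (ζ ^ d) ^ n = 1 := by
      rw [← zpow_natCast, ← zpow_mul, mul_comm, zpow_mul, zpow_natCast, hζ.pow_eq_one, one_zpow]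
    rw [geom_sum_eq (mt (hζ.zpow_eq_one_iff_dvd d).1 h), hpow, sub_self, zero_div]

theorem Fin.intCast_dvd_sub_add_mul_iff {n : ℕ} (r s : Fin n) (x : ℤ) :
    (n : ℤ) ∣ (r : ℤ) - s + n * x ↔ r = s := by
  rw [dvd_add_left (dvd_mul_right _ _)]
  refine ⟨fun h => ?_, fun h => by simp [h]⟩
  have := Int.eq_zero_of_abs_lt_dvd h (by rw [abs_lt]; omega)
  omega

theorem neg_one_zpow_mul_sub {K : Type*} [DivisionRing K] (n a b : ℤ) :
    (-1 : K) ^ (n * (a - b)) = (-1) ^ ((n + 1) * a) * (-1) ^ ((n + 1) * b) * (-1) ^ (a - b) := by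
  simp only [← Int.cast_negOnePow, ← Int.cast_mul, ← Units.val_mul, ← Int.negOnePow_add]
  congr 2
  rw [Int.negOnePow_eq_iff]
  exact ⟨-(a + n * b), by ring⟩

open Complex
open scoped Real

noncomputable def unitPhase (L : ℕ) (f : ℂ → ℂ) (k : Fin L) : ℂ :=
  f (exp (I * theta L k)) / ‖f (exp (I * theta L k))‖

theorem Gf_apply (L : ℕ) (f : ℂ → ℂ) (p q : Fin L) :
    Gf L f p q = (-1 : ℂ) ^ ((p : ℤ) - (q : ℤ)) / (L : ℂ) *
      ∑ k : Fin L, unitPhase L f k * exp (I * (theta L k : ℂ) * (((p : ℤ) - (q : ℤ) : ℤ) : ℂ)) :=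
  rfl

section SplitSum

variable {n M : ℕ}

theorem theta_finProdFinEquiv (m : Fin n) (j : Fin M) :
    (theta (n * M) (finProdFinEquiv (m, j)) : ℂ) = (theta M j + 2 * π * m) / n := by
  have hn : (n : ℂ) ≠ 0 := Nat.cast_ne_zero.2 m.pos.ne'
  have hM : (M : ℂ) ≠ 0 := Nat.cast_ne_zero.2 j.pos.ne'
  simp only [theta, finProdFinEquiv_apply_val]
  push_cast
  field_simp
  ring

theorem exp_I_mul_theta_finProdFinEquiv_pow (m : Fin n) (j : Fin M) :
    exp (I * theta (n * M) (finProdFinEquiv (m, j))) ^ n = exp (I * theta M j) := by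
  have hn : (n : ℂ) ≠ 0 := Nat.cast_ne_zero.2 m.pos.ne'
  have : (n : ℂ) * (I * ((theta M j + 2 * π * m) / n)) = I * theta M j + m * (2 * π * I) := by
    field_simp
  rw [← exp_nat_mul, theta_finProdFinEquiv, this, exp_add, exp_nat_mul_two_pi_mul_I, mul_one]

theorem exp_I_mul_theta_finProdFinEquiv_mul (d : ℤ) (m : Fin n) (j : Fin M) :
    exp (I * theta (n * M) (finProdFinEquiv (m, j)) * d)
      = (exp (2 * π * I / n) ^ d) ^ (m : ℕ) * exp (I * theta M j * d / n) := by
  rw [← zpow_natCast, ← zpow_mul, ← exp_int_mul, ← exp_add, theta_finProdFinEquiv]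
  congr 1
  push_cast
  ring

theorem sum_unitPhase_pow_add_one (d : ℤ) :
    ∑ k : Fin (n * M), unitPhase (n * M) (fun z => z ^ n + 1) k * exp (I * theta (n * M) k * d)
      = (∑ m ∈ range n, (exp (2 * π * I / n) ^ d) ^ m)
        * ∑ j : Fin M, unitPhase M (fun z => z + 1) j * exp (I * theta M j * d / n) := by
  rw [← finProdFinEquiv.sum_comp, Fintype.sum_prod_type, ← Fin.sum_univ_eq_sum_range, sum_mul_sum]
  refine sum_congr rfl fun m _ => sum_congr rfl fun j _ => ?_
  rw [unitPhase, unitPhase, exp_I_mul_theta_finProdFinEquiv_pow,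
    exp_I_mul_theta_finProdFinEquiv_mul]
  ring

end SplitSum

/-- Sends `(a, r)` to `r + n a`, so `r` labels the diagonal block. -/
noncomputable def blockIndex (n M : ℕ) : Fin M × Fin n ≃ Fin (n * M) :=
  finProdFinEquiv.trans (finCongr (Nat.mul_comm M n))

noncomputable def blockSign (n : ℕ) {M : ℕ} (a : Fin M) : ℂ :=
  (-1) ^ (((n : ℤ) + 1) * (a : ℤ))

theorem norm_blockSign (n : ℕ) {M : ℕ} (a : Fin M) : ‖blockSign n a‖ = 1 := by
  simp [blockSign]

theorem Gf_pow_add_one_blockIndex {n M : ℕ} (a b : Fin M) (r s : Fin n) :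
    Gf (n * M) (fun z => z ^ n + 1) (blockIndex n M (a, r)) (blockIndex n M (b, s))
      = if r = s then blockSign n a * blockSign n b * Gf M (fun z => z + 1) a b else 0 := by
  have hn : (n : ℂ) ≠ 0 := Nat.cast_ne_zero.2 r.pos.ne'
  have hM : (M : ℂ) ≠ 0 := Nat.cast_ne_zero.2 a.pos.ne'
  have hidx : ((blockIndex n M (a, r) : ℕ) : ℤ) - (blockIndex n M (b, s) : ℕ)
      = (r : ℤ) - s + n * ((a : ℤ) - b) := by
    simp only [blockIndex, Equiv.trans_apply, finCongr_apply, Fin.val_cast,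
      finProdFinEquiv_apply_val]
    push_cast
    ring
  rw [Gf_apply, hidx, sum_unitPhase_pow_add_one,
    (isPrimitiveRoot_exp n (Nat.cast_ne_zero.1 hn)).sum_range_zpow_pow]
  simp only [Fin.intCast_dvd_sub_add_mul_iff]
  split_ifs with hrs
  · subst hrs
    have hexp (j : Fin M) : exp (I * theta M j * ((n * ((a : ℤ) - b) : ℤ) : ℂ) / n)
        = exp (I * theta M j * (((a : ℤ) - b : ℤ) : ℂ)) := by
      congr 1
      push_cast
      field_simp
    simp only [sub_self, zero_add, hexp, Gf_apply, blockSign, neg_one_zpow_mul_sub, Nat.cast_mul]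
    generalize (∑ j : Fin M, _ : ℂ) = S
    field_simp
  · rw [zero_mul, mul_zero]

theorem Gf_pow_add_one_eq_submatrix_blockDiagonal (n M : ℕ) :
    Gf (n * M) (fun z => z ^ n + 1)
      = (Matrix.blockDiagonal fun _ : Fin n => Matrix.of fun a b : Fin M =>
          blockSign n a * blockSign n b * Gf M (fun z => z + 1) a b).submatrix
        (blockIndex n M).symm (blockIndex n M).symm := by
  ext p q
  obtain ⟨⟨a, r⟩, rfl⟩ := (blockIndex n M).surjective p
  obtain ⟨⟨b, s⟩, rfl⟩ := (blockIndex n M).surjective q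
  simp [Gf_pow_add_one_blockIndex, Matrix.blockDiagonal_apply]

theorem genPoly_factorization_zn_plus_one_general (n L M : ℕ) (hdvd : 2 * n ∣ L) (hM : M = L / n) :
    ∀ α : ℕ, Even α → 0 < α →
      genPoly (Gf L (fun z => z ^ n + 1)) (α : ℝ) =
        (genPoly (Gf M (fun z => z + 1)) (α : ℝ)) ^ n := by
  intro α _ hα
  obtain rfl : L = n * M := hM ▸ (Nat.mul_div_cancel' (dvd_of_mul_left_dvd hdvd)).symm
  have hα₀ : (α : ℝ) ≠ 0 := by positivity
  rw [genPoly_eq_minorGenPoly _ hα₀, genPoly_eq_minorGenPoly _ hα₀,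
    Gf_pow_add_one_eq_submatrix_blockDiagonal, Matrix.minorGenPoly_submatrix_equiv,
    Matrix.minorGenPoly_blockDiagonal,
    Matrix.minorGenPoly_scale _ (norm_blockSign n) (norm_blockSign n)]

/-- **Generating-function factorization for `f(z) = zⁿ + 1`.**  Let `n ≥ 1`,
`2n ∣ L`, `M = L/n`.  For every even positive integer `α`,
`F^{(α)}_{G^{(zⁿ+1)}(L)}(t) = (F^{(α)}_{G^{(z+1)}(M)}(t))ⁿ`. -/
theorem genPoly_factorization_zn_plus_one (n L M : ℕ) (hn : 1 ≤ n) (hL : 0 < L)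
    (hdvd : 2 * n ∣ L) (hM : M = L / n) :
    ∀ α : ℕ, Even α → 0 < α →
      genPoly (Gf L (fun z => z ^ n + 1)) (α : ℝ) =
        (genPoly (Gf M (fun z => z + 1)) (α : ℝ)) ^ n :=
  genPoly_factorization_zn_plus_one_general n L M hdvd hM
end

section
/- Let m ≥ 1 and let L be a positive integer with 2m | L such that L/(2m) is even. Then the half-shifted correlation matrix G^{(z^m+z^{−m})}(L) has real entries and is orthogonal: G^{(z^m+z^{−m})}(L) · (G^{(z^m+z^{−m})}(L))^T = I_L. -/
open scoped BigOperators Matrix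

/-!
Put `w_k := -e^{iθ_k}`. Then `(-1)^{n-m} e^{iθ_k(n-m)} = w_k^n · conj (w_k^m)`, so
`G = L⁻¹ • W D Wᴴ` with `W_{nk} = w_k^n` (a transposed Vandermonde matrix) and `D` the diagonal
of the phases `f/|f|` at the nodes. The ratios `w_k / w_{k'}` are `L`-th roots of unity, equal to
`1` only for `k = k'`, so the geometric sum gives `Wᴴ W = L • 1`; as `D` is unitary, so is `G`.
If `f` commutes with conjugation, reversing `k ↦ L - 1 - k` conjugates both the nodes and the
phases, hence `G` is real, and a real unitary matrix is orthogonal.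
For `f = z^m + z^{-m}` one has `f(e^{iθ}) = 2 cos (mθ)`, and writing `L = 2mM` with `M` even,
`cos (mθ_k) = 0` would force the odd number `2k + 1` to be a multiple of `M`.
-/

open Complex Matrix
open scoped Real ComplexConjugate

lemma sum_fin_pow_eq_ite {K : Type*} [Field K] [DecidableEq K] {L : ℕ} {z : K}
    (hz : z ^ L = 1) :
    ∑ n : Fin L, z ^ (n : ℕ) = if z = 1 then (L : K) else 0 := by
  rw [Fin.sum_univ_eq_sum_range]
  split_ifs with h
  · simp [h]
  · rw [geom_sum_eq h, hz, sub_self, zero_div]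

lemma smul_mul_diagonal_mul_conjTranspose_mul_conjTranspose {ι : Type*} [Fintype ι]
    [DecidableEq ι] {W : Matrix ι ι ℂ} {c : ℝ} (hc : c ≠ 0) (hW : Wᴴ * W = (c : ℂ) • 1)
    {s : ι → ℂ} (hs : ∀ i, s i * conj (s i) = 1) :
    ((c : ℂ)⁻¹ • (W * diagonal s * Wᴴ)) * ((c : ℂ)⁻¹ • (W * diagonal s * Wᴴ))ᴴ = 1 := by
  have hc' : (c : ℂ) ≠ 0 := ofReal_ne_zero.mpr hc
  have hWW : W * Wᴴ = (c : ℂ) • 1 := by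
    have h : ((c : ℂ)⁻¹ • Wᴴ) * W = 1 := by
      rw [smul_mul, hW, smul_smul, inv_mul_cancel₀ hc', one_smul]
    rw [mul_eq_one_comm, Matrix.mul_smul] at h
    rw [← smul_right_inj (inv_ne_zero hc'), h, smul_smul, inv_mul_cancel₀ hc', one_smul]
  have hD : diagonal s * (diagonal s)ᴴ = 1 := by
    rw [diagonal_conjTranspose, diagonal_mul_diagonal, ← diagonal_one]
    exact congrArg diagonal (funext hs)
  have hstar : star ((c : ℂ)⁻¹) = (c : ℂ)⁻¹ := by rw [star_inv₀, Complex.star_def, conj_ofReal]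
  calc ((c : ℂ)⁻¹ • (W * diagonal s * Wᴴ)) * ((c : ℂ)⁻¹ • (W * diagonal s * Wᴴ))ᴴ
      = ((c : ℂ)⁻¹ * (c : ℂ)⁻¹) •
          (W * diagonal s * (Wᴴ * W) * (diagonal s)ᴴ * Wᴴ) := by
        rw [conjTranspose_smul, hstar, smul_mul_smul_comm, conjTranspose_mul, conjTranspose_mul,
          conjTranspose_conjTranspose]
        simp only [Matrix.mul_assoc]
    _ = (c : ℂ)⁻¹ • (W * (diagonal s * (diagonal s)ᴴ) * Wᴴ) := by
        rw [hW, Matrix.mul_smul, Matrix.mul_one, Matrix.smul_mul, Matrix.smul_mul, smul_smul,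
          inv_mul_cancel_right₀ hc', Matrix.mul_assoc (W * _)]
        simp only [Matrix.mul_assoc]
    _ = 1 := by rw [hD, Matrix.mul_one, hWW, smul_smul, inv_mul_cancel₀ hc', one_smul]

noncomputable def node (L : ℕ) (k : Fin L) : ℂ := exp (I * theta L k)

noncomputable def phase (L : ℕ) (f : ℂ → ℂ) (k : Fin L) : ℂ :=
  f (node L k) / ((‖f (node L k)‖ : ℝ) : ℂ)

section Nodes

variable {L : ℕ}

lemma norm_node (k : Fin L) : ‖node L k‖ = 1 := by
  rw [node, mul_comm]
  exact norm_exp_ofReal_mul_I _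

lemma theta_rev (k : Fin L) : theta L k.rev = 2 * π - theta L k := by
  have hL : (L : ℝ) ≠ 0 := by have := k.pos; positivity
  have hk : ((k.rev : ℕ) : ℝ) = L - k - 1 := by
    rw [Fin.val_rev, Nat.cast_sub k.isLt]; push_cast; ring
  rw [theta, theta, hk]
  field_simp
  ring

lemma conj_node (k : Fin L) : conj (node L k) = node L k.rev := by
  rw [node, node, ← exp_conj, theta_rev, map_mul, conj_I, conj_ofReal]
  push_cast
  rw [show I * (2 * π - theta L k) = -I * theta L k + 2 * π * I by ring,
    exp_add, exp_two_pi_mul_I, mul_one]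

lemma node_pow_card (k : Fin L) : node L k ^ L = -1 := by
  have hL : (L : ℂ) ≠ 0 := by have := k.pos; exact_mod_cast this.ne'
  rw [node, ← exp_nat_mul, theta]
  push_cast
  rw [show (L : ℂ) * (I * (2 * π / L * (k + 1 / 2))) = (k : ℂ) * (2 * π * I) + π * I by
    field_simp, exp_add, exp_nat_mul_two_pi_mul_I, exp_pi_mul_I, one_mul]

lemma node_injective : Function.Injective (node L) := by
  intro k k' h
  obtain ⟨n, hn⟩ := exp_eq_exp_iff_exists_int.mp h
  have hL : (L : ℂ) ≠ 0 := by have := k.pos; exact_mod_cast this.ne'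
  have hdiff : ((k : ℤ) - k' : ℂ) = ((n * L : ℤ) : ℂ) := by
    simp only [theta] at hn
    push_cast at hn ⊢
    field_simp at hn
    linear_combination hn / 2
  have hdvd : (L : ℤ) ∣ (k : ℤ) - k' := ⟨n, by rw [mul_comm]; exact_mod_cast hdiff⟩
  have := Int.eq_zero_of_abs_lt_dvd hdvd (by rw [abs_lt]; omega)
  exact Fin.ext (by omega)

end Nodes

noncomputable def nodeVandermonde (L : ℕ) : Matrix (Fin L) (Fin L) ℂ :=
  vandermonde (-node L)

lemma nodeVandermonde_mul_conjTranspose (L : ℕ) :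
    nodeVandermonde L * (nodeVandermonde L)ᴴ = (L : ℂ) • 1 := by
  ext k k'
  have hpow : (node L k * conj (node L k')) ^ L = 1 := by
    rw [mul_pow, ← map_pow, node_pow_card, node_pow_card]
    norm_num
  have hone : node L k * conj (node L k') = 1 ↔ k = k' := by
    rw [← inv_eq_conj (norm_node k'), mul_inv_eq_one₀ (b := node L k') (exp_ne_zero _)]
    exact node_injective.eq_iff
  simp only [mul_apply, nodeVandermonde, vandermonde_apply, Pi.neg_apply, conjTranspose_apply,
    star_pow, star_neg, ← mul_pow, neg_mul_neg, Complex.star_def]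
  rw [sum_fin_pow_eq_ite hpow]
  simp [hone, one_apply]

lemma neg_one_zpow_mul_exp_eq (θ : ℝ) (n m : ℕ) :
    (-1 : ℂ) ^ ((n : ℤ) - m) * exp (I * θ * (((n : ℤ) - m : ℤ) : ℂ))
      = (-exp (I * θ)) ^ n * conj ((-exp (I * θ)) ^ m) := by
  have hnorm : ‖-exp (I * θ)‖ = 1 := by rw [norm_neg, mul_comm]; exact norm_exp_ofReal_mul_I θ
  rw [mul_comm (I * θ), exp_int_mul, ← mul_zpow, neg_one_mul,
    zpow_sub₀ (norm_ne_zero_iff.mp (by rw [hnorm]; exact one_ne_zero)), zpow_natCast, zpow_natCast,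
    ← inv_eq_conj (by rw [norm_pow, hnorm, one_pow])]
  rfl

lemma Gf_eq_smul (L : ℕ) (f : ℂ → ℂ) :
    Gf L f = (L : ℂ)⁻¹ •
      ((nodeVandermonde L)ᵀ * diagonal (phase L f) * (nodeVandermonde L)ᵀᴴ) := by
  ext n m
  rw [Matrix.smul_apply, mul_apply]
  simp only [Gf, of_apply, mul_diagonal, transpose_apply,
    conjTranspose_apply, nodeVandermonde, vandermonde_apply, Pi.neg_apply, smul_eq_mul,
    Finset.mul_sum, Complex.star_def]
  refine Finset.sum_congr rfl fun k _ => ?_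
  rw [node, mul_right_comm _ (phase L f k), ← neg_one_zpow_mul_exp_eq, phase, node]
  ring

lemma phase_mul_conj (L : ℕ) (f : ℂ → ℂ) (k : Fin L) (hf : f (node L k) ≠ 0) :
    phase L f k * conj (phase L f k) = 1 := by
  rw [phase, map_div₀, conj_ofReal, div_mul_div_comm, mul_conj', ← ofReal_mul, ← sq,
    ofReal_pow]
  exact div_self (pow_ne_zero 2 (ofReal_ne_zero.mpr (norm_ne_zero_iff.mpr hf)))

lemma Gf_mul_conjTranspose_eq_one (L : ℕ) (f : ℂ → ℂ) (hf : ∀ k, f (node L k) ≠ 0) :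
    Gf L f * (Gf L f)ᴴ = 1 := by
  rcases L.eq_zero_or_pos with rfl | hL
  · exact Subsingleton.elim _ _
  have hW : (nodeVandermonde L)ᵀᴴ * (nodeVandermonde L)ᵀ = ((L : ℝ) : ℂ) • 1 := by
    rw [conjTranspose_transpose_eq_transpose_conjTranspose, ← transpose_mul,
      nodeVandermonde_mul_conjTranspose, transpose_smul, transpose_one, ofReal_natCast]
  rw [Gf_eq_smul, ← ofReal_natCast]
  exact smul_mul_diagonal_mul_conjTranspose_mul_conjTranspose (Nat.cast_ne_zero.mpr hL.ne') hW
    fun k => phase_mul_conj L f k (hf k)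

lemma conj_nodeVandermonde_apply (L : ℕ) (k n : Fin L) :
    conj (nodeVandermonde L k n) = nodeVandermonde L k.rev n := by
  simp only [nodeVandermonde, vandermonde_apply, Pi.neg_apply, map_pow, map_neg, conj_node]

lemma phase_rev (L : ℕ) {f : ℂ → ℂ} (hf : ∀ z, f (conj z) = conj (f z)) (k : Fin L) :
    phase L f k.rev = conj (phase L f k) := by
  rw [phase, phase, ← conj_node, hf, norm_conj, map_div₀, conj_ofReal]

lemma conj_Gf_apply (L : ℕ) {f : ℂ → ℂ} (hf : ∀ z, f (conj z) = conj (f z)) (n m : Fin L) :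
    conj (Gf L f n m) = Gf L f n m := by
  rw [Gf_eq_smul, Matrix.smul_apply, smul_eq_mul, map_mul, map_inv₀, map_natCast, mul_apply,
    map_sum, ← Equiv.sum_comp Fin.revPerm]
  congr 1
  refine Finset.sum_congr rfl fun k _ => ?_
  simp only [mul_diagonal, transpose_apply, conjTranspose_apply, Complex.star_def, map_mul,
    Fin.revPerm_apply, conj_nodeVandermonde_apply, phase_rev L hf, Fin.rev_rev, conj_conj]

lemma exp_mul_I_zpow_add_zpow_neg (x : ℝ) (m : ℤ) :
    exp (I * x) ^ m + exp (I * x) ^ (-m) = 2 * (Real.cos (m * x) : ℂ) := by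
  rw [← exp_int_mul, ← exp_int_mul, ofReal_cos, cos]
  push_cast
  ring_nf

lemma cos_mul_theta_ne_zero (m L : ℕ) (hdvd : 2 * m ∣ L) (hM : Even (L / (2 * m)))
    (k : Fin L) : Real.cos (m * theta L k) ≠ 0 := by
  obtain ⟨M, rfl⟩ := hdvd
  have hpos : 0 < 2 * m * M := k.pos
  have hm : m ≠ 0 := by rintro rfl; simp at hpos
  have hM0 : M ≠ 0 := by rintro rfl; simp at hpos
  rw [Nat.mul_div_cancel_left M (by omega)] at hM
  obtain ⟨t, rfl⟩ := hM
  rw [Ne, Real.cos_eq_zero_iff]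
  rintro ⟨n, hn⟩
  have ht : (t : ℝ) ≠ 0 := by exact_mod_cast (by omega : t ≠ 0)
  have hodd : ((2 * (k : ℕ) + 1 : ℤ) : ℝ) = (2 * ((2 * n + 1) * t) : ℤ) := by
    rw [theta] at hn
    push_cast at hn ⊢
    field_simp at hn
    linear_combination hn
  have := Int.cast_injective hodd
  omega

theorem zm_plus_zminv_real_orthogonal_general (m L : ℕ)
    (hdvd : 2 * m ∣ L) (hMeven : Even (L / (2 * m))) :
    (∀ j k : Fin L, (Gf L (fun z => z ^ (m : ℤ) + z ^ (-(m : ℤ))) j k).im = 0) ∧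
    Gf L (fun z => z ^ (m : ℤ) + z ^ (-(m : ℤ))) *
      (Gf L (fun z => z ^ (m : ℤ) + z ^ (-(m : ℤ))))ᵀ = 1 := by
  set f : ℂ → ℂ := fun z => z ^ (m : ℤ) + z ^ (-(m : ℤ))
  have hreal : ∀ j k, conj (Gf L f j k) = Gf L f j k :=
    conj_Gf_apply L fun z => by simp only [f, map_add, map_zpow₀]
  have hunitary : Gf L f * (Gf L f)ᴴ = 1 := by
    refine Gf_mul_conjTranspose_eq_one L f fun k => ?_
    simp only [f, node]
    rw [exp_mul_I_zpow_add_zpow_neg, Int.cast_natCast]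
    exact mul_ne_zero two_ne_zero (ofReal_ne_zero.mpr (cos_mul_theta_ne_zero m L hdvd hMeven k))
  have hT : (Gf L f)ᴴ = (Gf L f)ᵀ := by ext j k; exact hreal k j
  exact ⟨fun j k => conj_eq_iff_im.mp (hreal j k), hT ▸ hunitary⟩

/-- **Reality and orthogonality.**  If `m ≥ 1`, `2m ∣ L` and `L/(2m)` is even,
then `G^{(z^m+z^{-m})}(L)` has real entries and is orthogonal:
`G · Gᵀ = I_L`. -/
theorem zm_plus_zminv_real_orthogonal (m L : ℕ) (hm : 1 ≤ m) (hL : 0 < L)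
    (hdvd : 2 * m ∣ L) (hMeven : Even (L / (2 * m))) :
    (∀ j k : Fin L, (Gf L (fun z => z ^ (m : ℤ) + z ^ (-(m : ℤ))) j k).im = 0) ∧
    Gf L (fun z => z ^ (m : ℤ) + z ^ (-(m : ℤ))) *
      (Gf L (fun z => z ^ (m : ℤ) + z ^ (-(m : ℤ))))ᵀ = 1 :=
  zm_plus_zminv_real_orthogonal_general m L hdvd hMeven
end
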